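/- (Theorem 3.2(iii)) Let δ ≥ 0 and suppose ε ≥ ε_max. Then q_δ ∈ M_ε(μ,σ) and sup_{q ∈ M_ε(μ,σ)} J_δ(q) = μ − δ(ε_min + 2σσ_F) + σσ_δ, the supremum being attained at q_δ; i.e. the constrained problem over M_ε(μ,σ) has the same value and optimizer as the unconstrained problem over M(μ,σ). -/

import Mathlib

open MeasureTheory Set Filter

noncomputable section

/-- Integral over the interval (0,1) with Lebesgue measure. -/
def intI (f : ℝ → ℝ) : ℝ := ∫ u in Ioo (0:ℝ) 1, f u

/-- Square integrability on (0,1). -/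
def SqInt (f : ℝ → ℝ) : Prop :=
  IntegrableOn f (Ioo (0:ℝ) 1) volume ∧ IntegrableOn (fun u => f u ^ 2) (Ioo (0:ℝ) 1) volume

/-- A quantile function: nondecreasing and square-integrable on (0,1). -/
def IsQuantile (q : ℝ → ℝ) : Prop := MonotoneOn q (Ioo (0:ℝ) 1) ∧ SqInt q

/-- Membership in `M(μ,σ)` : quantile function with prescribed first two moments. -/
def MemM (μ σ : ℝ) (q : ℝ → ℝ) : Prop :=
  IsQuantile q ∧ intI q = μ ∧ intI (fun u => q u ^ 2) = μ ^ 2 + σ ^ 2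

/-- Squared Wasserstein distance between (quantile) functions on (0,1). -/
def W2 (p q : ℝ → ℝ) : ℝ := intI (fun u => (p u - q u) ^ 2)

/-- Almost-everywhere equality on (0,1). -/
def AeEqI (f g : ℝ → ℝ) : Prop := f =ᵐ[(volume : Measure ℝ).restrict (Ioo (0:ℝ) 1)] g

/-- The penalized objective `J_δ(q) = ∫ γ q − δ d²(q_F, q)`. -/
def Jpen (γ qF : ℝ → ℝ) (δ : ℝ) (q : ℝ → ℝ) : ℝ :=
  intI (fun u => γ u * q u) - δ * W2 qF q

/-- `σ_δ = sqrt(σ₀² + 4δ²σ_F² + 4δσ₀σ_Fρ)`. -/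
def sigD (σ0 σF ρ δ : ℝ) : ℝ := Real.sqrt (σ0 ^ 2 + 4 * δ ^ 2 * σF ^ 2 + 4 * δ * σ0 * σF * ρ)

/-- The candidate optimizer `q_δ(u) = μ − (σ/σ_δ) μ_δ + (σ/σ_δ)(γ(u) + 2δ q_F(u))`,
where `μ_δ = 1 + 2δμ_F`. -/
def qD (μ σ μF σ0 σF ρ δ : ℝ) (γ qF : ℝ → ℝ) : ℝ → ℝ := fun u =>
  μ - σ / sigD σ0 σF ρ δ * (1 + 2 * δ * μF) + σ / sigD σ0 σF ρ δ * (γ u + 2 * δ * qF u)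

lemma volI : (volume (Ioo (0:ℝ) 1)).toReal = 1 := by
  rw [Real.volume_Ioo]; norm_num

lemma intOn_const (c : ℝ) : IntegrableOn (fun _ => c) (Ioo (0:ℝ) 1) volume := by
  exact integrableOn_const (by rw [Real.volume_Ioo]; exact ENNReal.ofReal_ne_top) enorm_ne_top

lemma intI_const (c : ℝ) : intI (fun _ => c) = c := by
  rw [intI, setIntegral_const, smul_eq_mul, measureReal_def, volI, one_mul]

lemma mul_intOn {f g : ℝ → ℝ} (hf : SqInt f) (hg : SqInt g) :
    IntegrableOn (fun u => f u * g u) (Ioo (0:ℝ) 1) volume := by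
  refine Integrable.mono' (((hf.2.add hg.2)).div_const 2)
    (hf.1.aestronglyMeasurable.mul hg.1.aestronglyMeasurable) ?_
  filter_upwards with u
  simp only [Real.norm_eq_abs, abs_mul, Pi.add_apply, Pi.div_apply]
  nlinarith [sq_nonneg (|f u| - |g u|), sq_abs (f u), sq_abs (g u), abs_nonneg (f u), abs_nonneg (g u)]

lemma sqInt_comb {f g : ℝ → ℝ} (hf : SqInt f) (hg : SqInt g) (a b c : ℝ) :
    SqInt (fun u => a + b * f u + c * g u) := by
  obtain ⟨hf1, hf2⟩ := hf; obtain ⟨hg1, hg2⟩ := hg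
  constructor
  · exact ((intOn_const a).add (hf1.const_mul b)).add (hg1.const_mul c)
  · have e : (fun u => (a + b * f u + c * g u)^2)
        = fun u => (a^2) + (2*a*b) * f u + (2*a*c) * g u + b^2 * f u^2 + c^2 * g u^2
            + (2*b*c) * (f u * g u) := by funext u; ring
    rw [e]
    exact (((((intOn_const _).add (hf1.const_mul _)).add (hg1.const_mul _)).add
      (hf2.const_mul _)).add (hg2.const_mul _)).add ((mul_intOn ⟨hf1,hf2⟩ ⟨hg1,hg2⟩).const_mul _)

lemma intI_mega {f g p : ℝ → ℝ} (hf : SqInt f) (hg : SqInt g) (hp : SqInt p)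
    (c0 c1 c2 c3 c4 c5 c6 c7 c8 c9 : ℝ) :
    intI (fun u => c0 + c1 * f u + c2 * g u + c3 * p u + c4 * f u ^ 2 + c5 * g u ^ 2
      + c6 * p u ^ 2 + c7 * (f u * g u) + c8 * (f u * p u) + c9 * (g u * p u))
    = c0 + c1 * intI f + c2 * intI g + c3 * intI p + c4 * intI (fun u => f u ^ 2)
      + c5 * intI (fun u => g u ^ 2) + c6 * intI (fun u => p u ^ 2)
      + c7 * intI (fun u => f u * g u) + c8 * intI (fun u => f u * p u)
      + c9 * intI (fun u => g u * p u) := by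
  have H0 := intOn_const c0
  have H1 := hf.1.const_mul c1
  have H2 := hg.1.const_mul c2
  have H3 := hp.1.const_mul c3
  have H4 := hf.2.const_mul c4
  have H5 := hg.2.const_mul c5
  have H6 := hp.2.const_mul c6
  have H7 := (mul_intOn hf hg).const_mul c7
  have H8 := (mul_intOn hf hp).const_mul c8
  have H9 := (mul_intOn hg hp).const_mul c9
  have E9 : (∫ u in Ioo (0:ℝ) 1, (c0 + c1 * f u + c2 * g u + c3 * p u + c4 * f u ^ 2 + c5 * g u ^ 2 + c6 * p u ^ 2 + c7 * (f u * g u) + c8 * (f u * p u) + c9 * (g u * p u))) = (∫ u in Ioo (0:ℝ) 1, (c0 + c1 * f u + c2 * g u + c3 * p u + c4 * f u ^ 2 + c5 * g u ^ 2 + c6 * p u ^ 2 + c7 * (f u * g u) + c8 * (f u * p u))) + ∫ u in Ioo (0:ℝ) 1, c9 * (g u * p u) := by exact integral_add (by exact ((((((((H0.add H1).add H2).add H3).add H4).add H5).add H6).add H7).add H8)) H9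
  have E8 : (∫ u in Ioo (0:ℝ) 1, (c0 + c1 * f u + c2 * g u + c3 * p u + c4 * f u ^ 2 + c5 * g u ^ 2 + c6 * p u ^ 2 + c7 * (f u * g u) + c8 * (f u * p u))) = (∫ u in Ioo (0:ℝ) 1, (c0 + c1 * f u + c2 * g u + c3 * p u + c4 * f u ^ 2 + c5 * g u ^ 2 + c6 * p u ^ 2 + c7 * (f u * g u))) + ∫ u in Ioo (0:ℝ) 1, c8 * (f u * p u) := by exact integral_add (by exact (((((((H0.add H1).add H2).add H3).add H4).add H5).add H6).add H7)) H8
  have E7 : (∫ u in Ioo (0:ℝ) 1, (c0 + c1 * f u + c2 * g u + c3 * p u + c4 * f u ^ 2 + c5 * g u ^ 2 + c6 * p u ^ 2 + c7 * (f u * g u))) = (∫ u in Ioo (0:ℝ) 1, (c0 + c1 * f u + c2 * g u + c3 * p u + c4 * f u ^ 2 + c5 * g u ^ 2 + c6 * p u ^ 2)) + ∫ u in Ioo (0:ℝ) 1, c7 * (f u * g u) := by exact integral_add (by exact ((((((H0.add H1).add H2).add H3).add H4).add H5).add H6)) H7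
  have E6 : (∫ u in Ioo (0:ℝ) 1, (c0 + c1 * f u + c2 * g u + c3 * p u + c4 * f u ^ 2 + c5 * g u ^ 2 + c6 * p u ^ 2)) = (∫ u in Ioo (0:ℝ) 1, (c0 + c1 * f u + c2 * g u + c3 * p u + c4 * f u ^ 2 + c5 * g u ^ 2)) + ∫ u in Ioo (0:ℝ) 1, c6 * p u ^ 2 := by exact integral_add (by exact (((((H0.add H1).add H2).add H3).add H4).add H5)) H6
  have E5 : (∫ u in Ioo (0:ℝ) 1, (c0 + c1 * f u + c2 * g u + c3 * p u + c4 * f u ^ 2 + c5 * g u ^ 2)) = (∫ u in Ioo (0:ℝ) 1, (c0 + c1 * f u + c2 * g u + c3 * p u + c4 * f u ^ 2)) + ∫ u in Ioo (0:ℝ) 1, c5 * g u ^ 2 := by exact integral_add (by exact ((((H0.add H1).add H2).add H3).add H4)) H5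
  have E4 : (∫ u in Ioo (0:ℝ) 1, (c0 + c1 * f u + c2 * g u + c3 * p u + c4 * f u ^ 2)) = (∫ u in Ioo (0:ℝ) 1, (c0 + c1 * f u + c2 * g u + c3 * p u)) + ∫ u in Ioo (0:ℝ) 1, c4 * f u ^ 2 := by exact integral_add (by exact (((H0.add H1).add H2).add H3)) H4
  have E3 : (∫ u in Ioo (0:ℝ) 1, (c0 + c1 * f u + c2 * g u + c3 * p u)) = (∫ u in Ioo (0:ℝ) 1, (c0 + c1 * f u + c2 * g u)) + ∫ u in Ioo (0:ℝ) 1, c3 * p u := by exact integral_add (by exact ((H0.add H1).add H2)) H3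
  have E2 : (∫ u in Ioo (0:ℝ) 1, (c0 + c1 * f u + c2 * g u)) = (∫ u in Ioo (0:ℝ) 1, (c0 + c1 * f u)) + ∫ u in Ioo (0:ℝ) 1, c2 * g u := by exact integral_add (by exact (H0.add H1)) H2
  have E1 : (∫ u in Ioo (0:ℝ) 1, (c0 + c1 * f u)) = (∫ u in Ioo (0:ℝ) 1, (c0)) + ∫ u in Ioo (0:ℝ) 1, c1 * f u := by exact integral_add (by exact H0) H1
  unfold intI
  rw [E9, E8, E7, E6, E5, E4, E3, E2, E1]
  simp only [integral_const_mul, setIntegral_const, smul_eq_mul, measureReal_def, volI, one_mul]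

lemma intI_nonneg {f : ℝ → ℝ} (h : ∀ u ∈ Ioo (0:ℝ) 1, 0 ≤ f u) : 0 ≤ intI f :=
  setIntegral_nonneg measurableSet_Ioo h

lemma intI_cs {f g : ℝ → ℝ} (hf : SqInt f) (hg : SqInt g) :
    (intI (fun u => f u * g u))^2 ≤ intI (fun u => f u ^ 2) * intI (fun u => g u ^ 2) := by
  set A := intI (fun u => f u ^ 2) with hA
  set B := intI (fun u => g u ^ 2) with hB
  set C := intI (fun u => f u * g u) with hC
  have key : ∀ t : ℝ, 0 ≤ A - 2*t*C + t^2*B := by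
    intro t
    have h1 : (0:ℝ) ≤ intI (fun u => (f u - t * g u)^2) :=
      intI_nonneg (fun u _ => sq_nonneg _)
    have h2 : intI (fun u => (f u - t * g u)^2) = A - 2*t*C + t^2*B := by
      have e : (fun u => (f u - t * g u)^2) = fun u => (0:ℝ) + 0 * f u + 0 * g u + 0 * f u
          + 1 * f u ^2 + t^2 * g u ^2 + 0 * f u ^2 + (-(2*t)) * (f u * g u)
          + 0 * (f u * f u) + 0 * (g u * f u) := by
        funext u; ring
      rw [e, intI_mega hf hg hf, ← hA, ← hB, ← hC]; ring
    linarith [h2 ▸ h1]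
  have hBn : 0 ≤ B := intI_nonneg (fun u _ => sq_nonneg _)
  have hAn : 0 ≤ A := intI_nonneg (fun u _ => sq_nonneg _)
  rcases eq_or_lt_of_le hBn with hB0 | hBpos
  · have hC0 : C = 0 := by
      by_contra hC0
      have h := key ((A+1)/(2*C))
      rw [← hB0] at h
      have h2 : 2*((A+1)/(2*C))*C = A+1 := by field_simp
      nlinarith [h, h2]
    rw [hC0]; nlinarith [hAn, hBn]
  · have e : (A - 2*(C/B)*C + (C/B)^2*B)*B = A*B - C^2 := by field_simp; ring
    have h := mul_nonneg (key (C/B)) hBpos.le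
    rw [e] at h
    linarith

lemma intI_chebyshev {f g : ℝ → ℝ} (hfm : MonotoneOn f (Ioo (0:ℝ) 1))
    (hgm : MonotoneOn g (Ioo (0:ℝ) 1)) (hf : SqInt f) (hg : SqInt g) :
    intI f * intI g ≤ intI (fun u => f u * g u) := by
  have inner : ∀ a b : ℝ, intI (fun x => (f x - a) * (g x - b))
      = a * b + (-b) * intI f + (-a) * intI g + intI (fun u => f u * g u) := by
    intro a b
    have e : (fun x => (f x - a) * (g x - b)) = fun u => (a*b) + (-b) * f u + (-a) * g u
        + 0 * f u + 0 * f u^2 + 0 * g u^2 + 0 * f u^2 + 1 * (f u * g u)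
        + 0 * (f u * f u) + 0 * (g u * f u) := by funext u; ring
    rw [e, intI_mega hf hg hf]; ring
  have outer_nonneg : 0 ≤ intI (fun y => intI (fun x => (f x - f y) * (g x - g y))) := by
    apply intI_nonneg
    intro y hy
    apply intI_nonneg
    intro x hx
    rcases le_total x y with hxy | hxy
    · have h1 := hfm hx hy hxy
      have h2 := hgm hx hy hxy
      exact mul_nonneg_of_nonpos_of_nonpos (by linarith) (by linarith)
    · have h1 := hfm hy hx hxy
      have h2 := hgm hy hx hxy
      exact mul_nonneg (by linarith) (by linarith)
  have eouter : (fun y => intI (fun x => (f x - f y) * (g x - g y)))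
      = fun y => (intI (fun u => f u * g u)) + (- intI g) * f y + (- intI f) * g y + 0 * f y
        + 0 * f y^2 + 0 * g y^2 + 0 * f y^2 + 1 * (f y * g y)
        + 0 * (f y * f y) + 0 * (g y * f y) := by
    funext y; rw [inner (f y) (g y)]; ring
  rw [eouter, intI_mega hf hg hf] at outer_nonneg
  nlinarith [outer_nonneg]

set_option maxHeartbeats 1600000 in
theorem statement8
    (μ μF σ σF : ℝ) (hσpos : 0 < σ) (hσFpos : 0 < σF)
    (qF : ℝ → ℝ) (hqF : IsQuantile qF)
    (hqFm : intI qF = μF) (hqF2 : intI (fun u => qF u ^ 2) = μF ^ 2 + σF ^ 2)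
    (γ : ℝ → ℝ) (hγmono : MonotoneOn γ (Ioo (0:ℝ) 1)) (hγsq : SqInt γ)
    (hγ1 : intI γ = 1)
    (σ0 : ℝ) (hσ0 : σ0 = Real.sqrt (intI (fun u => γ u ^ 2) - 1)) (hσ0pos : 0 < σ0)
    (ρ : ℝ) (hρ : ρ = (intI (fun u => γ u * qF u) - μF) / (σ0 * σF))
    (εmin : ℝ) (hεmin : εmin = (μF - μ) ^ 2 + (σF - σ) ^ 2)
    (εmax : ℝ) (hεmax : εmax = εmin + 2 * σ * σF * (1 - ρ))
    (δ : ℝ) (hδ : 0 ≤ δ)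
    (ε : ℝ) (hε : εmax ≤ ε) :
    (MemM μ σ (qD μ σ μF σ0 σF ρ δ γ qF) ∧
      W2 qF (qD μ σ μF σ0 σF ρ δ γ qF) ≤ ε) ∧
    Jpen γ qF δ (qD μ σ μF σ0 σF ρ δ γ qF) =
      μ - δ * (εmin + 2 * σ * σF) + σ * sigD σ0 σF ρ δ ∧
    ∀ q : ℝ → ℝ, MemM μ σ q → W2 qF q ≤ ε →
      Jpen γ qF δ q ≤ μ - δ * (εmin + 2 * σ * σF) + σ * sigD σ0 σF ρ δ := by
  obtain ⟨hqFmono, hqFsq⟩ := hqF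
  have hσ0σF : (0:ℝ) < σ0 * σF := mul_pos hσ0pos hσFpos
  have hIγ2 : intI (fun u => γ u ^ 2) = 1 + σ0 ^ 2 := by
    have h0 : 0 < Real.sqrt (intI (fun u => γ u ^ 2) - 1) := hσ0 ▸ hσ0pos
    have h1 := Real.sqrt_pos.mp h0
    rw [hσ0, Real.sq_sqrt h1.le]; ring
  have hIγqF : intI (fun u => γ u * qF u) = μF + σ0 * σF * ρ := by
    rw [hρ]; field_simp; ring
  have hρ0 : 0 ≤ ρ := by
    have cheb := intI_chebyshev hγmono hqFmono hγsq hqFsq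
    rw [hγ1, hqFm, hIγqF] at cheb
    nlinarith [cheb, hσ0σF]
  have hρ1 : ρ ≤ 1 := by
    have ha : SqInt (fun u => γ u - 1) := by
      have hh := sqInt_comb hγsq hqFsq (-1) 1 0
      have e : (fun u => (-1:ℝ) + 1 * γ u + 0 * qF u) = fun u => γ u - 1 := by funext u; ring
      rwa [e] at hh
    have hb : SqInt (fun u => qF u - μF) := by
      have hh := sqInt_comb hγsq hqFsq (-μF) 0 1
      have e : (fun u => -μF + 0 * γ u + 1 * qF u) = fun u => qF u - μF := by funext u; ring
      rwa [e] at hh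
    have cs := intI_cs ha hb
    beta_reduce at cs
    have I1 : intI (fun u => (γ u - 1) * (qF u - μF)) = σ0 * σF * ρ := by
      have e : (fun u => (γ u - 1) * (qF u - μF)) = fun u => (μF) + (-μF) * γ u + (-1) * qF u
          + 0 * qF u + 0 * γ u ^2 + 0 * qF u ^2 + 0 * qF u ^2 + 1 * (γ u * qF u)
          + 0 * (γ u * qF u) + 0 * (qF u * qF u) := by funext u; ring
      rw [e, intI_mega hγsq hqFsq hqFsq, hγ1, hqFm, hIγqF]; ring
    have I2 : intI (fun u => (γ u - 1) ^ 2) = σ0 ^ 2 := by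
      have e : (fun u => (γ u - 1) ^ 2) = fun u => (1:ℝ) + (-2) * γ u + 0 * qF u + 0 * qF u
          + 1 * γ u ^2 + 0 * qF u ^2 + 0 * qF u ^2 + 0 * (γ u * qF u)
          + 0 * (γ u * qF u) + 0 * (qF u * qF u) := by funext u; ring
      rw [e, intI_mega hγsq hqFsq hqFsq, hγ1, hIγ2]; ring
    have I3 : intI (fun u => (qF u - μF) ^ 2) = σF ^ 2 := by
      have e : (fun u => (qF u - μF) ^ 2) = fun u => (μF^2) + 0 * γ u + (-(2*μF)) * qF u
          + 0 * qF u + 0 * γ u ^2 + 1 * qF u ^2 + 0 * qF u ^2 + 0 * (γ u * qF u)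
          + 0 * (γ u * qF u) + 0 * (qF u * qF u) := by funext u; ring
      rw [e, intI_mega hγsq hqFsq hqFsq, hqFm, hqF2]; ring
    rw [I1, I2, I3] at cs
    have hr2 : ρ ^ 2 ≤ 1 := by nlinarith [cs, mul_pos hσ0σF hσ0σF]
    nlinarith [hρ0, hr2]
  have hρsq : ρ ^ 2 ≤ 1 := by nlinarith [hρ0, hρ1]
  set sd := sigD σ0 σF ρ δ with hsddef
  have hsdsq : 0 < σ0 ^ 2 + 4 * δ ^ 2 * σF ^ 2 + 4 * δ * σ0 * σF * ρ := by
    nlinarith [sq_nonneg (δ*σF), mul_nonneg (mul_nonneg (mul_nonneg hδ hσ0pos.le) hσFpos.le) hρ0, hσ0pos]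
  have hsdpos : 0 < sd := by rw [hsddef, sigD]; exact Real.sqrt_pos.mpr hsdsq
  have hsd2 : sd ^ 2 = σ0 ^ 2 + 4 * δ ^ 2 * σF ^ 2 + 4 * δ * σ0 * σF * ρ := by
    rw [hsddef, sigD]; exact Real.sq_sqrt hsdsq.le
  have hm2 : (σ/sd)^2 * (σ0 ^ 2 + 4 * δ ^ 2 * σF ^ 2 + 4 * δ * σ0 * σF * ρ) = σ^2 := by
    rw [← hsd2]; field_simp
  have hqDeq : qD μ σ μF σ0 σF ρ δ γ qF
      = fun u => (μ - σ/sd*(1+2*δ*μF)) + (σ/sd) * γ u + (2*δ*(σ/sd)) * qF u := by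
    funext u; simp only [qD, ← hsddef]; ring
  have hsq_qD : SqInt (qD μ σ μF σ0 σF ρ δ γ qF) := by
    rw [hqDeq]; exact sqInt_comb hγsq hqFsq _ _ _
  have hmono_qD : MonotoneOn (qD μ σ μF σ0 σF ρ δ γ qF) (Ioo (0:ℝ) 1) := by
    intro x hx y hy hxy
    have h1 := hγmono hx hy hxy
    have h2 := hqFmono hx hy hxy
    have hmn : 0 ≤ σ/sd := div_nonneg hσpos.le hsdpos.le
    simp only [hqDeq]
    have e1 := mul_le_mul_of_nonneg_left h1 hmn
    have e2 := mul_le_mul_of_nonneg_left h2 (mul_nonneg (mul_nonneg (by norm_num) hδ) hmn :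
      (0:ℝ) ≤ 2*δ*(σ/sd))
    linarith
  have hIqD : intI (qD μ σ μF σ0 σF ρ δ γ qF) = μ := by
    rw [hqDeq]
    have e : (fun u => (μ - σ/sd*(1+2*δ*μF)) + (σ/sd) * γ u + (2*δ*(σ/sd)) * qF u)
        = fun u => (μ - σ/sd*(1+2*δ*μF)) + (σ/sd) * γ u + (2*δ*(σ/sd)) * qF u + 0 * qF u
          + 0 * γ u ^2 + 0 * qF u ^2 + 0 * qF u ^2 + 0 * (γ u * qF u) + 0 * (γ u * qF u)
          + 0 * (qF u * qF u) := by funext u; ring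
    rw [e, intI_mega hγsq hqFsq hqFsq, hγ1, hqFm]; ring
  have hIqD2 : intI (fun u => qD μ σ μF σ0 σF ρ δ γ qF u ^ 2) = μ ^ 2 + σ ^ 2 := by
    have e : (fun u => qD μ σ μF σ0 σF ρ δ γ qF u ^ 2)
        = fun u => ((μ - σ/sd*(1+2*δ*μF))^2) + (2*(μ - σ/sd*(1+2*δ*μF))*(σ/sd)) * γ u
          + (2*(μ - σ/sd*(1+2*δ*μF))*(2*δ*(σ/sd))) * qF u + 0 * qF u
          + ((σ/sd)^2) * γ u ^2 + ((2*δ*(σ/sd))^2) * qF u ^2 + 0 * qF u ^2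
          + (2*(σ/sd)*(2*δ*(σ/sd))) * (γ u * qF u) + 0 * (γ u * qF u) + 0 * (qF u * qF u) := by
      funext u; simp only [qD, ← hsddef]; ring
    rw [e, intI_mega hγsq hqFsq hqFsq, hγ1, hqFm, hIγ2, hqF2, hIγqF]
    linear_combination hm2
  set h : ℝ → ℝ := fun u => γ u + 2*δ*qF u - (1+2*δ*μF) with hhdef
  have hhsq : SqInt h := by
    have hh2 := sqInt_comb hγsq hqFsq (-(1+2*δ*μF)) 1 (2*δ)
    have e : (fun u => -(1+2*δ*μF) + 1 * γ u + (2*δ) * qF u) = h := by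
      funext u; simp only [hhdef]; ring
    rwa [e] at hh2
  have Ih2 : intI (fun u => h u ^ 2) = sd ^ 2 := by
    have e : (fun u => h u ^ 2) = fun u => ((1+2*δ*μF)^2) + (-(2*(1+2*δ*μF))) * γ u
        + (-(4*δ*(1+2*δ*μF))) * qF u + 0 * qF u + 1 * γ u ^2 + (4*δ^2) * qF u ^2
        + 0 * qF u ^2 + (4*δ) * (γ u * qF u) + 0 * (γ u * qF u) + 0 * (qF u * qF u) := by
      funext u; simp only [hhdef]; ring
    rw [e, intI_mega hγsq hqFsq hqFsq, hγ1, hqFm, hIγ2, hqF2, hIγqF]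
    linear_combination -hsd2
  have master : ∀ q : ℝ → ℝ, SqInt q → intI q = μ → intI (fun u => q u ^ 2) = μ ^ 2 + σ ^ 2 →
      Jpen γ qF δ q = (1+2*δ*μF)*μ + intI (fun u => h u * (q u - μ)) - δ*(μF^2+σF^2+μ^2+σ^2) := by
    intro q hqs hq1 hq2
    have hW : W2 qF q = (μF^2+σF^2) + (μ^2+σ^2) - 2 * intI (fun u => qF u * q u) := by
      have e : (fun u => (qF u - q u)^2) = fun u => (0:ℝ) + 0 * γ u + 0 * qF u + 0 * q u
          + 0 * γ u ^2 + 1 * qF u ^2 + 1 * q u ^2 + 0 * (γ u * qF u) + 0 * (γ u * q u)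
          + (-2) * (qF u * q u) := by funext u; ring
      rw [W2, e, intI_mega hγsq hqFsq hqs, hqF2, hq2]; ring
    have hhq : intI (fun u => h u * (q u - μ)) = intI (fun u => γ u * q u)
        + 2*δ*intI (fun u => qF u * q u) - (1+2*δ*μF)*μ := by
      have e : (fun u => h u * (q u - μ)) = fun u => ((1+2*δ*μF)*μ) + (-μ) * γ u
          + (-(2*δ*μ)) * qF u + (-(1+2*δ*μF)) * q u + 0 * γ u ^2 + 0 * qF u ^2 + 0 * q u ^2
          + 0 * (γ u * qF u) + 1 * (γ u * q u) + (2*δ) * (qF u * q u) := by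
        funext u; simp only [hhdef]; ring
      rw [e, intI_mega hγsq hqFsq hqs, hγ1, hqFm, hq1]; ring
    simp only [Jpen]
    rw [hW, hhq]; ring
  have hXqD : intI (fun u => h u * (qD μ σ μF σ0 σF ρ δ γ qF u - μ)) = σ * sd := by
    have e : (fun u => h u * (qD μ σ μF σ0 σF ρ δ γ qF u - μ))
        = fun u => ((σ/sd)*(1+2*δ*μF)^2) + (-(2*(σ/sd)*(1+2*δ*μF))) * γ u
          + (-(4*δ*(σ/sd)*(1+2*δ*μF))) * qF u + 0 * qF u + (σ/sd) * γ u ^2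
          + (4*δ^2*(σ/sd)) * qF u ^2 + 0 * qF u ^2 + (4*δ*(σ/sd)) * (γ u * qF u)
          + 0 * (γ u * qF u) + 0 * (qF u * qF u) := by
      funext u; simp only [hhdef, qD, ← hsddef]; ring
    rw [e, intI_mega hγsq hqFsq hqFsq, hγ1, hqFm, hIγ2, hqF2, hIγqF]
    have e2 : σ/sd*(σ0 ^ 2 + 4 * δ ^ 2 * σF ^ 2 + 4 * δ * σ0 * σF * ρ) = σ * sd := by
      rw [← hsd2, pow_two, show σ/sd*(sd*sd) = (σ/sd*sd)*sd from by ring,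
          div_mul_cancel₀ _ hsdpos.ne']
    linear_combination e2
  have hJqD : Jpen γ qF δ (qD μ σ μF σ0 σF ρ δ γ qF) = μ - δ*(εmin+2*σ*σF) + σ*sd := by
    rw [master _ hsq_qD hIqD hIqD2, hXqD, hεmin]; ring
  have hW2qD : W2 qF (qD μ σ μF σ0 σF ρ δ γ qF) ≤ ε := by
    have hVal : W2 qF (qD μ σ μF σ0 σF ρ δ γ qF)
        = (μF-μ)^2 + σF^2 + σ^2 - 2*((σ/sd)*(σ0*σF*ρ + 2*δ*σF^2)) := by
      have e : (fun u => (qF u - qD μ σ μF σ0 σF ρ δ γ qF u)^2)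
          = fun u => ((σ/sd*(1+2*δ*μF) - μ)^2) + (2*(σ/sd*(1+2*δ*μF) - μ)*(-(σ/sd))) * γ u
            + (2*(σ/sd*(1+2*δ*μF) - μ)*(1-2*δ*(σ/sd))) * qF u + 0 * qF u
            + ((σ/sd)^2) * γ u ^2 + ((1-2*δ*(σ/sd))^2) * qF u ^2 + 0 * qF u ^2
            + (2*(-(σ/sd))*(1-2*δ*(σ/sd))) * (γ u * qF u) + 0 * (γ u * qF u)
            + 0 * (qF u * qF u) := by
        funext u; simp only [qD, ← hsddef]; ring
      rw [W2, e, intI_mega hγsq hqFsq hqFsq, hγ1, hqFm, hIγ2, hqF2, hIγqF]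
      linear_combination hm2
    have t1 : 0 ≤ δ*(σ0*(σF*(ρ*(1-ρ^2)))) :=
      mul_nonneg hδ (mul_nonneg hσ0pos.le (mul_nonneg hσFpos.le
        (mul_nonneg hρ0 (by linarith))))
    have t2 : 0 ≤ δ^2*(σF^2*(1-ρ^2)) :=
      mul_nonneg (sq_nonneg δ) (mul_nonneg (sq_nonneg σF) (by linarith))
    have key : (σ0*σF*ρ + 2*δ*σF^2)^2 - (sd*(σF*ρ))^2
        = 4*σF^2*(δ*(σ0*(σF*(ρ*(1-ρ^2))))) + 4*σF^2*(δ^2*(σF^2*(1-ρ^2))) := by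
      linear_combination (-(σF^2*ρ^2)) * hsd2
    have p1 : 0 ≤ 4*σF^2*(δ*(σ0*(σF*(ρ*(1-ρ^2))))) :=
      mul_nonneg (by positivity) t1
    have p2 : 0 ≤ 4*σF^2*(δ^2*(σF^2*(1-ρ^2))) :=
      mul_nonneg (by positivity) t2
    have hdiff : (sd*(σF*ρ))^2 ≤ (σ0*σF*ρ + 2*δ*σF^2)^2 := by linarith
    have hsum : 0 ≤ sd*(σF*ρ) + (σ0*σF*ρ + 2*δ*σF^2) := by
      have u1 : 0 ≤ sd*(σF*ρ) := mul_nonneg hsdpos.le (mul_nonneg hσFpos.le hρ0)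
      have u2 : 0 ≤ σ0*σF*ρ := mul_nonneg (mul_nonneg hσ0pos.le hσFpos.le) hρ0
      have u3 : (0:ℝ) ≤ 2*δ*σF^2 := mul_nonneg (mul_nonneg (by norm_num) hδ) (sq_nonneg σF)
      linarith
    have ha0 : 0 ≤ sd*(σF*ρ) := mul_nonneg hsdpos.le (mul_nonneg hσFpos.le hρ0)
    have hb0 : 0 ≤ σ0*σF*ρ + 2*δ*σF^2 := by
      have u2 : 0 ≤ σ0*σF*ρ := mul_nonneg (mul_nonneg hσ0pos.le hσFpos.le) hρ0
      have u3 : (0:ℝ) ≤ 2*δ*σF^2 := mul_nonneg (mul_nonneg (by norm_num) hδ) (sq_nonneg σF)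
      linarith
    have hstep : sd * (σF * ρ) ≤ σ0*σF*ρ + 2*δ*σF^2 := by
      have hs := Real.sqrt_le_sqrt hdiff
      rwa [Real.sqrt_sq ha0, Real.sqrt_sq hb0] at hs
    have hmt : σ*σF*ρ ≤ (σ/sd)*(σ0*σF*ρ + 2*δ*σF^2) := by
      have h1 := mul_le_mul_of_nonneg_left hstep (div_nonneg hσpos.le hsdpos.le)
      have h2 : σ / sd * (sd * (σF * ρ)) = σ * σF * ρ := by
        rw [show σ / sd * (sd * (σF * ρ)) = (σ / sd * sd) * (σF * ρ) from by ring,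
            div_mul_cancel₀ _ hsdpos.ne']
        ring
      rw [h2] at h1; exact h1
    have hemax : εmax = (μF-μ)^2 + σF^2 + σ^2 - 2*(σ*σF*ρ) := by rw [hεmax, hεmin]; ring
    rw [hVal]
    rw [hemax] at hε
    linarith
  have hub : ∀ q : ℝ → ℝ, MemM μ σ q → W2 qF q ≤ ε →
      Jpen γ qF δ q ≤ μ - δ*(εmin+2*σ*σF) + σ*sd := by
    intro q hq _
    obtain ⟨⟨hqmono, hqsq⟩, hq1, hq2⟩ := hq
    rw [master q hqsq hq1 hq2]
    have hqc : SqInt (fun u => q u - μ) := by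
      have hh2 := sqInt_comb hqsq hqsq (-μ) 1 0
      have e : (fun u => -μ + 1 * q u + 0 * q u) = fun u => q u - μ := by funext u; ring
      rwa [e] at hh2
    have hcs := intI_cs hhsq hqc
    beta_reduce at hcs
    have Iqc2 : intI (fun u => (q u - μ)^2) = σ^2 := by
      have e : (fun u => (q u - μ)^2) = fun u => (μ^2) + 0 * γ u + 0 * qF u + (-(2*μ)) * q u
          + 0 * γ u ^2 + 0 * qF u ^2 + 1 * q u ^2 + 0 * (γ u * qF u) + 0 * (γ u * q u)
          + 0 * (qF u * q u) := by funext u; ring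
      rw [e, intI_mega hγsq hqFsq hqsq, hq1, hq2]; ring
    rw [Ih2, Iqc2] at hcs
    have hX : intI (fun u => h u * (q u - μ)) ≤ sd * σ := by
      have hss : (0:ℝ) ≤ sd*σ := mul_nonneg hsdpos.le hσpos.le
      have hcs' : (intI (fun u => h u * (q u - μ)))^2 ≤ (sd*σ)^2 := by
        rw [mul_pow]; exact hcs
      have h2 := Real.sqrt_le_sqrt hcs'
      rw [Real.sqrt_sq hss] at h2
      calc intI (fun u => h u * (q u - μ)) ≤ |intI (fun u => h u * (q u - μ))| := le_abs_self _
        _ = Real.sqrt ((intI (fun u => h u * (q u - μ)))^2) := (Real.sqrt_sq_eq_abs _).symm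
        _ ≤ sd*σ := h2
    have hbase : (1+2*δ*μF)*μ - δ*(μF^2+σF^2+μ^2+σ^2) = μ - δ*(εmin+2*σ*σF) := by
      rw [hεmin]; ring
    linarith [hX]
  exact ⟨⟨⟨⟨hmono_qD, hsq_qD⟩, hIqD, hIqD2⟩, hW2qD⟩, hJqD, hub⟩
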